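/- arXiv:1307.3001 — 3 statements merged into one kernel-verified Lean document; each statement's English description precedes it below -/
import Mathlib

section
/- For β > 1 with c_β := 1 − 1/√β + 1/β > 0, the Fourier transform (with convention φ̂(ξ) = ∫ φ(x) e^{-2πiξx} dx) of φ_β(x) = (c_β √π)^{-1}(e^{-x²} − e^{-βx²} + e^{-β²x²}) evaluated at ξ = √β equals c_β^{-1}(e^{-βπ²} − β^{-1/2} e^{-π²} + β^{-1} e^{-π²/β}), and this quantity is negative for all sufficiently large β. -/
open Real MeasureTheory

lemma gauss_int (a : ℝ) (ha : 0 < a) (ξ : ℝ) :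
    Integrable (fun x : ℝ => ((Real.exp (-a * x ^ 2) : ℝ) : ℂ)
      * Complex.exp (-2 * (π : ℂ) * Complex.I * (ξ : ℂ) * (x : ℂ))) := by
  have h := integrable_cexp_quadratic (b := (a : ℂ)) (by simpa using ha)
    (-2 * (π : ℂ) * Complex.I * (ξ : ℂ)) 0
  refine h.congr (Filter.Eventually.of_forall fun x => ?_)
  dsimp only
  rw [Complex.ofReal_exp, ← Complex.exp_add]
  congr 1
  push_cast
  ring

lemma gauss_ft (a : ℝ) (ha : 0 < a) (ξ : ℝ) :
    (∫ x : ℝ, ((Real.exp (-a * x ^ 2) : ℝ) : ℂ)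
      * Complex.exp (-2 * (π : ℂ) * Complex.I * (ξ : ℂ) * (x : ℂ)))
    = ((Real.sqrt (π / a) * Real.exp (-π ^ 2 * ξ ^ 2 / a) : ℝ) : ℂ) := by
  have h := fourierIntegral_gaussian (b := (a : ℂ)) (by simpa using ha) ((-2 * π * ξ : ℝ) : ℂ)
  have heq : (∫ x : ℝ, ((Real.exp (-a * x ^ 2) : ℝ) : ℂ)
      * Complex.exp (-2 * (π : ℂ) * Complex.I * (ξ : ℂ) * (x : ℂ)))
      = ∫ x : ℝ, Complex.exp (Complex.I * ((-2 * π * ξ : ℝ) : ℂ) * x)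
        * Complex.exp (-(a : ℂ) * x ^ 2) := by
    congr 1; ext x
    rw [Complex.ofReal_exp, ← Complex.exp_add, ← Complex.exp_add]
    congr 1
    push_cast
    ring
  rw [heq, h]
  have h1 : ((π : ℂ) / (a : ℂ)) ^ (1 / 2 : ℂ) = ((Real.sqrt (π / a) : ℝ) : ℂ) := by
    rw [Real.sqrt_eq_rpow, Complex.ofReal_cpow (by positivity)]
    push_cast
    norm_num
  have h2 : Complex.exp (-((-2 * π * ξ : ℝ) : ℂ) ^ 2 / (4 * (a : ℂ)))
      = ((Real.exp (-π ^ 2 * ξ ^ 2 / a) : ℝ) : ℂ) := by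
    rw [Complex.ofReal_exp]
    congr 1
    have ha' : (a : ℂ) ≠ 0 := by exact_mod_cast ha.ne'
    push_cast
    field_simp
    ring
  rw [h1, h2, ← Complex.ofReal_mul]
lemma aux_arith (c s p b E1 E2 E3 : ℝ) (hc : c ≠ 0) (hs : s ≠ 0) (hp : p ≠ 0) (hb : b ≠ 0) :
    1 / (c * p) * (p * E1 - p / s * E2 + p / b * E3) = (1 / c) * (E1 - E2 / s + E3 / b) := by
  field_simp

/-- The Fourier transform (convention `φ̂(ξ) = ∫ φ(x) e^{-2πiξx} dx`) of `φ_β`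
evaluated at `ξ = √β` equals `c_β⁻¹ (e^{-βπ²} - β^{-1/2} e^{-π²} + β⁻¹ e^{-π²/β})`,
and this quantity is negative for all sufficiently large `β`. -/
theorem stmt3 (β : ℝ) (hβ : 1 < β) (hc : 0 < 1 - 1 / Real.sqrt β + 1 / β) :
    (∫ x : ℝ, ((((1 / ((1 - 1 / Real.sqrt β + 1 / β) * Real.sqrt π))
          * (Real.exp (-x ^ 2) - Real.exp (-β * x ^ 2) + Real.exp (-β ^ 2 * x ^ 2)) : ℝ) : ℂ)
        * Complex.exp (-2 * (π : ℂ) * Complex.I * (Real.sqrt β : ℂ) * (x : ℂ))))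
      = (((1 / (1 - 1 / Real.sqrt β + 1 / β))
          * (Real.exp (-β * π ^ 2) - Real.exp (-π ^ 2) / Real.sqrt β
            + Real.exp (-π ^ 2 / β) / β) : ℝ) : ℂ)
    ∧ ∃ B : ℝ, ∀ β' : ℝ, B ≤ β' → 1 < β' → 0 < 1 - 1 / Real.sqrt β' + 1 / β' →
        (1 / (1 - 1 / Real.sqrt β' + 1 / β'))
          * (Real.exp (-β' * π ^ 2) - Real.exp (-π ^ 2) / Real.sqrt β'
            + Real.exp (-π ^ 2 / β') / β') < 0 := by
  have hβ0 : (0 : ℝ) < β := lt_trans one_pos hβ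
  have hβ2 : (0 : ℝ) < β ^ 2 := by positivity
  have hsβ : 0 < Real.sqrt β := Real.sqrt_pos.mpr hβ0
  constructor
  · set c : ℝ := 1 - 1 / Real.sqrt β + 1 / β with hcdef
    set k : ℝ := 1 / (c * Real.sqrt π) with hkdef
    have hi1 : Integrable (fun x : ℝ => ((Real.exp (-x ^ 2) : ℝ) : ℂ)
        * Complex.exp (-2 * (π : ℂ) * Complex.I * (Real.sqrt β : ℂ) * (x : ℂ))) := by
      simpa using gauss_int 1 one_pos (Real.sqrt β)
    have hi2 := gauss_int β hβ0 (Real.sqrt β)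
    have hi3 := gauss_int (β ^ 2) hβ2 (Real.sqrt β)
    have key : (∫ x : ℝ, ((((k)
          * (Real.exp (-x ^ 2) - Real.exp (-β * x ^ 2) + Real.exp (-β ^ 2 * x ^ 2)) : ℝ) : ℂ)
        * Complex.exp (-2 * (π : ℂ) * Complex.I * (Real.sqrt β : ℂ) * (x : ℂ))))
        = (k : ℂ) * ((∫ x : ℝ, ((Real.exp (-x ^ 2) : ℝ) : ℂ)
              * Complex.exp (-2 * (π : ℂ) * Complex.I * (Real.sqrt β : ℂ) * (x : ℂ)))
          - (∫ x : ℝ, ((Real.exp (-β * x ^ 2) : ℝ) : ℂ)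
              * Complex.exp (-2 * (π : ℂ) * Complex.I * (Real.sqrt β : ℂ) * (x : ℂ)))
          + (∫ x : ℝ, ((Real.exp (-β ^ 2 * x ^ 2) : ℝ) : ℂ)
              * Complex.exp (-2 * (π : ℂ) * Complex.I * (Real.sqrt β : ℂ) * (x : ℂ)))) := by
      calc (∫ x : ℝ, ((((k)
              * (Real.exp (-x ^ 2) - Real.exp (-β * x ^ 2) + Real.exp (-β ^ 2 * x ^ 2)) : ℝ) : ℂ)
            * Complex.exp (-2 * (π : ℂ) * Complex.I * (Real.sqrt β : ℂ) * (x : ℂ))))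
          = ∫ x : ℝ, (k : ℂ) * (((Real.exp (-x ^ 2) : ℝ) : ℂ)
              * Complex.exp (-2 * (π : ℂ) * Complex.I * (Real.sqrt β : ℂ) * (x : ℂ))
            - ((Real.exp (-β * x ^ 2) : ℝ) : ℂ)
              * Complex.exp (-2 * (π : ℂ) * Complex.I * (Real.sqrt β : ℂ) * (x : ℂ))
            + ((Real.exp (-β ^ 2 * x ^ 2) : ℝ) : ℂ)
              * Complex.exp (-2 * (π : ℂ) * Complex.I * (Real.sqrt β : ℂ) * (x : ℂ))) := by
            congr 1; ext x; push_cast; ring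
        _ = (k : ℂ) * ∫ x : ℝ, (((Real.exp (-x ^ 2) : ℝ) : ℂ)
              * Complex.exp (-2 * (π : ℂ) * Complex.I * (Real.sqrt β : ℂ) * (x : ℂ))
            - ((Real.exp (-β * x ^ 2) : ℝ) : ℂ)
              * Complex.exp (-2 * (π : ℂ) * Complex.I * (Real.sqrt β : ℂ) * (x : ℂ))
            + ((Real.exp (-β ^ 2 * x ^ 2) : ℝ) : ℂ)
              * Complex.exp (-2 * (π : ℂ) * Complex.I * (Real.sqrt β : ℂ) * (x : ℂ))) :=
            MeasureTheory.integral_const_mul _ _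
        _ = _ := by
            have hi12 : Integrable (fun x : ℝ => ((Real.exp (-x ^ 2) : ℝ) : ℂ)
                * Complex.exp (-2 * (π : ℂ) * Complex.I * (Real.sqrt β : ℂ) * (x : ℂ))
              - ((Real.exp (-β * x ^ 2) : ℝ) : ℂ)
                * Complex.exp (-2 * (π : ℂ) * Complex.I * (Real.sqrt β : ℂ) * (x : ℂ))) :=
              hi1.sub hi2
            rw [integral_add hi12 hi3, integral_sub hi1 hi2]
    rw [key]
    have h1 : (∫ x : ℝ, ((Real.exp (-x ^ 2) : ℝ) : ℂ)
        * Complex.exp (-2 * (π : ℂ) * Complex.I * (Real.sqrt β : ℂ) * (x : ℂ)))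
        = ((Real.sqrt (π / 1) * Real.exp (-π ^ 2 * (Real.sqrt β) ^ 2 / 1) : ℝ) : ℂ) := by
      rw [← gauss_ft 1 one_pos (Real.sqrt β)]; congr 1; ext x; norm_num
    rw [h1, gauss_ft β hβ0 (Real.sqrt β), gauss_ft (β ^ 2) hβ2 (Real.sqrt β)]
    rw [← Complex.ofReal_sub, ← Complex.ofReal_add, ← Complex.ofReal_mul]
    congr 1
    rw [Real.sq_sqrt hβ0.le]
    rw [show -π ^ 2 * β / 1 = -β * π ^ 2 by ring,
        show -π ^ 2 * β / β = -π ^ 2 by field_simp,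
        show -π ^ 2 * β / β ^ 2 = -π ^ 2 / β by field_simp]
    rw [div_one, Real.sqrt_div Real.pi_pos.le β,
        Real.sqrt_div Real.pi_pos.le (β ^ 2), Real.sqrt_sq hβ0.le]
    have hcne : c ≠ 0 := hc.ne'
    have hspi : (0 : ℝ) < Real.sqrt π := Real.sqrt_pos.mpr Real.pi_pos
    exact aux_arith c (Real.sqrt β) (Real.sqrt π) β _ _ _ hcne hsβ.ne' hspi.ne' hβ0.ne'
  · refine ⟨10 ^ 10, fun b hB hb1 hbc => ?_⟩
    have hb0 : (0 : ℝ) < b := lt_trans one_pos hb1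
    have hsb : 0 < Real.sqrt b := Real.sqrt_pos.mpr hb0
    have hsb5 : (10 : ℝ) ^ 5 ≤ Real.sqrt b := by
      rw [show ((10:ℝ) ^ 5) = Real.sqrt ((10 ^ 10 : ℝ)) by
        rw [show ((10:ℝ)^10) = ((10:ℝ)^5)^2 by ring, Real.sqrt_sq (by norm_num)]]
      exact Real.sqrt_le_sqrt hB
    have hpi2 : π ^ 2 < 10 := by nlinarith [Real.pi_lt_d2, Real.pi_pos]
    have he10 : Real.exp 10 < 50000 := by
      have h1 : Real.exp 10 = Real.exp 1 ^ (10 : ℕ) := by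
        rw [← Real.exp_nat_mul]; norm_num
      have h2 : Real.exp 1 ^ (10 : ℕ) < 2.7182818286 ^ (10 : ℕ) :=
        pow_lt_pow_left₀ Real.exp_one_lt_d9 (Real.exp_pos 1).le (by norm_num)
      rw [h1]; nlinarith [h2]
    have hE1 : Real.exp (-b * π ^ 2) < 1 / b := by
      have h : Real.exp (-b * π ^ 2) ≤ Real.exp (-b) := by
        apply Real.exp_le_exp.mpr
        nlinarith [mul_pos hb0 (show (0:ℝ) < π ^ 2 - 1 by nlinarith [Real.pi_gt_three])]
      refine h.trans_lt ?_
      rw [Real.exp_neg, one_div]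
      exact inv_strictAnti₀ hb0 (lt_of_lt_of_le (lt_add_one b) (Real.add_one_le_exp b))
    have hE3 : Real.exp (-π ^ 2 / b) / b ≤ 1 / b := by
      gcongr
      refine Real.exp_le_one_iff.mpr ?_
      have h0 : (0:ℝ) ≤ π ^ 2 / b := by positivity
      have h0' : -π ^ 2 / b = -(π ^ 2 / b) := by ring
      rw [h0']
      exact neg_nonpos.mpr h0
    have hsum : Real.exp (-b * π ^ 2) + Real.exp (-π ^ 2 / b) / b < 2 / b := by
      have h2 : (2:ℝ)/b = 1/b + 1/b := by ring
      linarith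
    have hcmp : 2 / b < Real.exp (-π ^ 2) / Real.sqrt b := by
      have h1 : 2 / Real.sqrt b < Real.exp (-π ^ 2) := by
        have h2 : 2 / Real.sqrt b ≤ 2 / 10 ^ 5 := by gcongr
        have h3 : (2:ℝ) / 10 ^ 5 < Real.exp (-10) := by
          rw [Real.exp_neg]
          have hy := mul_inv_cancel₀ (Real.exp_pos 10).ne'
          nlinarith [Real.exp_pos 10, he10, hy, inv_pos.mpr (Real.exp_pos 10)]
        have h4 : Real.exp (-10) < Real.exp (-π ^ 2) := Real.exp_lt_exp.mpr (by linarith)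
        linarith
      calc 2 / b = (2 / Real.sqrt b) / Real.sqrt b := by
            rw [div_div, Real.mul_self_sqrt hb0.le]
        _ < Real.exp (-π ^ 2) / Real.sqrt b := (div_lt_div_iff_of_pos_right hsb).mpr h1
    have hneg : Real.exp (-b * π ^ 2) - Real.exp (-π ^ 2) / Real.sqrt b
        + Real.exp (-π ^ 2 / b) / b < 0 := by linarith
    exact mul_neg_of_pos_of_neg (one_div_pos.mpr hbc) hneg
end

section
/- Let L > 0, k₀ ≥ 1, φ even nonnegative in L¹(ℝ) with ∫φ = 1, φ̂(k₀/L) < 0, and φ̂(k/L) ≥ 0 for all k ∈ ℕ, k ≠ k₀. Let μ > μ* := (4π²k₀²/L²)/|φ̂(k₀/L)| and λ_μ = (1 − μφ̂(k₀/L))/(4π²k₀²/L² + 1). If u is an even L-periodic C² solution of −λ_μ u'' + λ_μ u = u − μ(φ*u), then u is a scalar multiple of cos(2πk₀x/L). -/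
/-!
Test the equation against the cosine modes `cos (2πkx/L)` over one period. Integrating by parts
twice turns `u''` into `-(2πk/L)²` times the coefficient, and Fubini together with periodicity and
evenness of `u` turns the convolution `φ * u` into `φ̂(k/L)` times it, so the `k`-th cosine
coefficient `A_k` satisfies `λ_μ (4π²k²/L² + 1) A_k = (1 - μ φ̂(k/L)) A_k`. Since `λ_μ > 1` and
`μ φ̂(k/L) ≥ 0` for `k ≠ k₀`, every coefficient except `A_k₀` vanishes, and an even continuous
periodic function is determined by its cosine coefficients.
-/

open Real MeasureTheory Function

lemma intervalIntegral_eq_zero_of_odd {f : ℝ → ℝ} (hf : ∀ x, f (-x) = -f x) (c : ℝ) :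
    ∫ x in -c..c, f x = 0 := by
  have h : ∫ x in -c..c, f x = -∫ x in -c..c, f x := by
    simpa [hf] using (intervalIntegral.integral_comp_neg (a := -c) (b := c) f).symm
  linarith

lemma Function.Periodic.deriv {f : ℝ → ℝ} {L : ℝ} (hf : Periodic f L) : Periodic (deriv f) L :=
  fun x => by rw [← deriv_comp_add_const, funext hf]

lemma Function.Periodic.integral_mul_deriv_eq_neg_integral_deriv_mul {f g f' g' : ℝ → ℝ} {L : ℝ}
    (hfp : Periodic f L) (hgp : Periodic g L) (hf : ∀ x, HasDerivAt f (f' x) x)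
    (hg : ∀ x, HasDerivAt g (g' x) x) (hf' : Continuous f') (hg' : Continuous g') (a : ℝ) :
    ∫ x in a..a + L, f x * g' x = -∫ x in a..a + L, f' x * g x := by
  rw [intervalIntegral.integral_mul_deriv_eq_deriv_mul (fun x _ => hf x) (fun x _ => hg x)
    (hf'.intervalIntegrable _ _) (hg'.intervalIntegrable _ _), hfp a, hgp a]
  ring

lemma intervalIntegral_mul_integral_comp_sub_comm {g u φ : ℝ → ℝ} {G M a b : ℝ}
    (hg : Continuous g) (hgG : ∀ x, |g x| ≤ G) (hu : Continuous u) (huM : ∀ x, |u x| ≤ M)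
    (hφ : Integrable φ) (hab : a ≤ b) :
    ∫ x in a..b, g x * ∫ y, φ y * u (x - y) = ∫ y, φ y * ∫ x in a..b, g x * u (x - y) := by
  have hint : Integrable (uncurry fun x y => g x * (φ y * u (x - y)))
      ((volume.restrict (Set.Ioc a b)).prod volume) := by
    refine Integrable.mono' (g := fun z => G * (M * |φ z.2|)) ?_ ?_ (.of_forall fun z => ?_)
    · exact (integrable_const G).mul_prod (hφ.abs.const_mul M)
    · exact (hg.comp continuous_fst).aestronglyMeasurable.mul
        (hφ.aestronglyMeasurable.comp_snd.mul (by fun_prop : Continuous fun z : ℝ × ℝ =>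
          u (z.1 - z.2)).aestronglyMeasurable)
    · simp only [uncurry, Real.norm_eq_abs, abs_mul]
      have hG : 0 ≤ G := (abs_nonneg _).trans (hgG 0)
      calc |g z.1| * (|φ z.2| * |u (z.1 - z.2)|) ≤ G * (|φ z.2| * M) := by
            gcongr; exacts [hgG _, huM _]
        _ = G * (M * |φ z.2|) := by ring
  simp_rw [intervalIntegral.integral_of_le hab, ← integral_const_mul]
  rw [integral_integral_swap hint]
  simp_rw [mul_left_comm (g _)]

section Modes

variable {L : ℝ}

lemma periodic_cos_mode (hL : L ≠ 0) (k : ℕ) : Periodic (fun x => cos (2 * π * (k / L) * x)) L :=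
  fun x => by
    simp only
    rw [show 2 * π * (k / L) * (x + L) = 2 * π * (k / L) * x + k * (2 * π) by field_simp]
    exact cos_add_nat_mul_two_pi _ _

lemma periodic_sin_mode (hL : L ≠ 0) (k : ℕ) : Periodic (fun x => sin (2 * π * (k / L) * x)) L :=
  fun x => by
    simp only
    rw [show 2 * π * (k / L) * (x + L) = 2 * π * (k / L) * x + k * (2 * π) by field_simp]
    exact sin_add_nat_mul_two_pi _ _

lemma integral_cos_mode (hL : 0 < L) (m : ℤ) :
    ∫ x in -(L / 2)..L / 2, cos (2 * π * (m / L) * x) = if m = 0 then L else 0 := by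
  split_ifs with hm
  · simp [hm]
  · have hω : 2 * π * (m / L) ≠ 0 :=
      mul_ne_zero (by positivity) (div_ne_zero (by exact_mod_cast hm) hL.ne')
    rw [intervalIntegral.integral_comp_mul_left (fun x => cos x) hω, integral_cos,
      show 2 * π * (m / L) * (L / 2) = m * π by field_simp,
      show 2 * π * (m / L) * -(L / 2) = -(m * π) by field_simp, sin_neg, sin_int_mul_pi]
    simp

lemma integral_cos_mode_mul_cos_mode (hL : 0 < L) (k j : ℕ) :
    ∫ x in -(L / 2)..L / 2, cos (2 * π * (k / L) * x) * cos (2 * π * (j / L) * x)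
      = ((if k = j then L else 0) + if k + j = 0 then L else 0) / 2 := by
  have hprod : ∀ x, cos (2 * π * (k / L) * x) * cos (2 * π * (j / L) * x)
      = (cos (2 * π * (((k - j : ℤ) : ℝ) / L) * x)
          + cos (2 * π * (((k + j : ℤ) : ℝ) / L) * x)) / 2 := by
    intro x
    push_cast
    rw [show 2 * π * ((k - j) / L) * x = 2 * π * (k / L) * x - 2 * π * (j / L) * x by ring,
      show 2 * π * ((k + j) / L) * x = 2 * π * (k / L) * x + 2 * π * (j / L) * x by ring,
      cos_sub, cos_add]
    ring
  simp_rw [hprod]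
  rw [intervalIntegral.integral_div, intervalIntegral.integral_add
    (Continuous.intervalIntegrable (by fun_prop) _ _)
    (Continuous.intervalIntegrable (by fun_prop) _ _), integral_cos_mode hL, integral_cos_mode hL]
  simp only [sub_eq_zero, Nat.cast_inj]
  norm_cast

end Modes

noncomputable def cosCoeff (L : ℝ) (f : ℝ → ℝ) (k : ℕ) : ℝ :=
  ∫ x in -(L / 2)..L / 2, cos (2 * π * (k / L) * x) * f x

section CosCoeff

variable {L : ℝ}

lemma cosCoeff_deriv_deriv (hL : 0 < L) {u : ℝ → ℝ} (hu : ContDiff ℝ 2 u) (hup : Periodic u L)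
    (k : ℕ) : cosCoeff L (deriv (deriv u)) k = -(2 * π * (k / L)) ^ 2 * cosCoeff L u k := by
  set ω := 2 * π * (k / L)
  have hu' : ContDiff ℝ 1 (deriv u) := ((contDiff_succ_iff_deriv (n := 1)).mp hu).2.2
  have hcos : ∀ x, HasDerivAt (fun t => cos (ω * t)) (-(ω * sin (ω * x))) x := fun x => by
    simpa [mul_comm] using ((hasDerivAt_id x).const_mul ω).cos
  have hsin : ∀ x, HasDerivAt (fun t => sin (ω * t)) (ω * cos (ω * x)) x := fun x => by
    simpa [mul_comm] using ((hasDerivAt_id x).const_mul ω).sin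
  have hperiod : -(L / 2) + L = L / 2 := by ring
  have h₁ := (periodic_cos_mode hL.ne' k).integral_mul_deriv_eq_neg_integral_deriv_mul hup.deriv
    hcos (fun x => (hu'.differentiable one_ne_zero x).hasDerivAt) (by fun_prop)
    (hu'.continuous_deriv le_rfl) (-(L / 2))
  have h₂ := (periodic_sin_mode hL.ne' k).integral_mul_deriv_eq_neg_integral_deriv_mul hup
    hsin (fun x => (hu.differentiable (by norm_num) x).hasDerivAt) (by fun_prop)
    hu'.continuous (-(L / 2))
  rw [hperiod] at h₁ h₂
  simp only [neg_mul, intervalIntegral.integral_neg, mul_assoc ω,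
    intervalIntegral.integral_const_mul] at h₁ h₂
  rw [cosCoeff, cosCoeff, h₁, h₂]
  ring

lemma cosCoeff_comp_sub (hL : 0 < L) {u : ℝ → ℝ} (hu : Continuous u) (hue : ∀ x, u (-x) = u x)
    (hup : Periodic u L) (k : ℕ) (y : ℝ) :
    cosCoeff L (fun x => u (x - y)) k = cos (2 * π * (k / L) * y) * cosCoeff L u k := by
  set ω := 2 * π * (k / L)
  have hshifted : Periodic (fun t => cos (ω * (t + y)) * u t) L := fun t => by
    simpa [add_right_comm t L y] using
      congr_arg₂ (· * ·) (periodic_cos_mode hL.ne' k (t + y)) (hup t)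
  have hsin : ∫ t in -(L / 2)..L / 2, sin (ω * t) * u t = 0 :=
    intervalIntegral_eq_zero_of_odd (fun t => by rw [mul_neg, sin_neg, hue, neg_mul]) _
  calc cosCoeff L (fun x => u (x - y)) k
      = ∫ t in -(L / 2) - y..-(L / 2) - y + L, cos (ω * (t + y)) * u t := by
        rw [cosCoeff, show -(L / 2) - y + L = L / 2 - y by ring,
          ← intervalIntegral.integral_comp_sub_right _ y]
        simp only [sub_add_cancel, ω]
    _ = ∫ t in -(L / 2)..L / 2,
          cos (ω * y) * (cos (ω * t) * u t) - sin (ω * y) * (sin (ω * t) * u t) := by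
        rw [hshifted.intervalIntegral_add_eq _ (-(L / 2)), show -(L / 2) + L = L / 2 by ring]
        congr 1
        ext t
        rw [mul_add, cos_add]
        ring
    _ = cos (ω * y) * cosCoeff L u k := by
        rw [intervalIntegral.integral_sub (Continuous.intervalIntegrable (by fun_prop) _ _)
          (Continuous.intervalIntegrable (by fun_prop) _ _), intervalIntegral.integral_const_mul,
          intervalIntegral.integral_const_mul, hsin, cosCoeff]
        ring

lemma cosCoeff_convolution (hL : 0 < L) {u φ : ℝ → ℝ} (hu : Continuous u)
    (hue : ∀ x, u (-x) = u x) (hup : Periodic u L) (hφ : Integrable φ) (k : ℕ) :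
    cosCoeff L (fun x => ∫ y, φ y * u (x - y)) k
      = (∫ y, φ y * cos (2 * π * (k / L) * y)) * cosCoeff L u k := by
  obtain ⟨M, hM⟩ := isBounded_iff_forall_norm_le.mp (hup.isBounded_of_continuous hL.ne' hu)
  rw [cosCoeff, intervalIntegral_mul_integral_comp_sub_comm (by fun_prop)
    (fun _ => abs_cos_le_one _) hu (fun x => hM _ ⟨x, rfl⟩) hφ (by linarith)]
  have hshift (y : ℝ) : ∫ x in -(L / 2)..L / 2, cos (2 * π * (k / L) * x) * u (x - y)
      = cos (2 * π * (k / L) * y) * cosCoeff L u k :=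
    cosCoeff_comp_sub hL hu hue hup k y
  simp_rw [hshift, ← mul_assoc]
  exact integral_mul_const _ _

lemma integral_cos_int_mode_mul (w : ℝ → ℝ) (n : ℤ) :
    ∫ x in -(L / 2)..L / 2, cos (2 * π * (n / L) * x) * w x = cosCoeff L w n.natAbs := by
  obtain ⟨k, rfl | rfl⟩ := Int.eq_nat_or_neg n
  · simp [cosCoeff]
  · rw [Int.cast_neg, Int.cast_natCast, Int.natAbs_neg, Int.natAbs_natCast, cosCoeff]
    congr 1
    ext x
    rw [neg_div, mul_neg, neg_mul, cos_neg]

lemma eq_zero_of_cosCoeff_eq_zero (hL : 0 < L) {w : ℝ → ℝ} (hw : Continuous w)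
    (hwe : ∀ x, w (-x) = w x) (hwp : Periodic w L) (hcoeff : ∀ k, cosCoeff L w k = 0) :
    w = 0 := by
  have : Fact (0 < L) := ⟨hL⟩
  have hwp' : Periodic (fun x => (w x : ℂ)) L := fun x => by simp [hwp x]
  let F : C(AddCircle L, ℂ) :=
    ⟨hwp'.lift, continuous_coinduced_dom.mpr (Complex.continuous_ofReal.comp hw)⟩
  have hF : ∀ n, fourierCoeff F n = 0 := by
    intro n
    have hsin : ∫ x in -(L / 2)..L / 2, sin (2 * π * (n / L) * x) * w x = 0 :=
      intervalIntegral_eq_zero_of_odd (fun x => by rw [mul_neg, sin_neg, hwe, neg_mul]) _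
    have hexp : ∀ x : ℝ, fourier (-n) (x : AddCircle L) • F x
        = ((cos (2 * π * (n / L) * x) * w x : ℝ) : ℂ)
          - ((sin (2 * π * (n / L) * x) * w x : ℝ) : ℂ) * Complex.I := by
      intro x
      rw [fourier_coe_apply, show F x = w x from hwp'.lift_coe x, smul_eq_mul,
        show 2 * π * Complex.I * ((-n : ℤ) : ℂ) * x / L
          = ((-(2 * π * (n / L) * x) : ℝ) : ℂ) * Complex.I by push_cast; ring,
        Complex.exp_mul_I, ← Complex.ofReal_cos, ← Complex.ofReal_sin, cos_neg, sin_neg]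
      push_cast
      ring
    rw [fourierCoeff_eq_intervalIntegral F n (-(L / 2)), show -(L / 2) + L = L / 2 by ring]
    simp_rw [hexp]
    rw [intervalIntegral.integral_sub (Continuous.intervalIntegrable (by fun_prop) _ _)
      (Continuous.intervalIntegrable (by fun_prop) _ _), intervalIntegral.integral_mul_const,
      intervalIntegral.integral_ofReal, intervalIntegral.integral_ofReal, hsin,
      integral_cos_int_mode_mul, hcoeff]
    simp
  have hF0 : F = 0 := by
    have hsum := hasSum_fourier_series_of_summable (f := F)
      (summable_zero.congr fun n => (hF n).symm)
    simp only [hF, zero_smul] at hsum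
    exact hsum.unique hasSum_zero
  ext x
  simpa [F] using congr_arg (fun f : C(AddCircle L, ℂ) => f x) hF0

lemma exists_eq_mul_cos_of_cosCoeff_eq_zero (hL : 0 < L) {u : ℝ → ℝ} (hu : Continuous u)
    (hue : ∀ x, u (-x) = u x) (hup : Periodic u L) (k₀ : ℕ)
    (hcoeff : ∀ k ≠ k₀, cosCoeff L u k = 0) :
    ∃ γ, ∀ x, u x = γ * cos (2 * π * (k₀ / L) * x) := by
  set c : ℝ → ℝ := fun x => cos (2 * π * (k₀ / L) * x)
  have hmode (k : ℕ) : cosCoeff L c k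
      = ((if k = k₀ then L else 0) + if k + k₀ = 0 then L else 0) / 2 :=
    integral_cos_mode_mul_cos_mode hL k k₀
  have hN : cosCoeff L c k₀ ≠ 0 := by
    have : L / 2 ≤ cosCoeff L c k₀ := by rw [hmode, if_pos rfl]; split_ifs <;> linarith
    linarith
  set γ := cosCoeff L u k₀ / cosCoeff L c k₀
  set w := fun x => u x - γ * c x
  have hw : w = 0 := by
    refine eq_zero_of_cosCoeff_eq_zero hL (by fun_prop) (fun x => ?_) (fun x => ?_) fun k => ?_
    · simp only [w, c, hue, mul_neg, cos_neg]
    · simp only [w, hup x, show c (x + L) = c x from periodic_cos_mode hL.ne' k₀ x]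
    · have hlin : cosCoeff L w k = cosCoeff L u k - γ * cosCoeff L c k := by
        simp only [cosCoeff, w, mul_sub, mul_left_comm _ γ]
        rw [intervalIntegral.integral_sub (Continuous.intervalIntegrable (by fun_prop) _ _)
          (Continuous.intervalIntegrable (by fun_prop) _ _), intervalIntegral.integral_const_mul]
      rcases eq_or_ne k k₀ with rfl | hk
      · rw [hlin, div_mul_cancel₀ _ hN, sub_self]
      · rw [hlin, hcoeff k hk, hmode, if_neg hk, if_neg (by omega)]
        ring
  exact ⟨γ, fun x => sub_eq_zero.mp (congr_fun hw x)⟩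

lemma cosCoeff_of_solution (hL : 0 < L) {φ u : ℝ → ℝ} {μ lam : ℝ} (hφ : Integrable φ)
    (hu : ContDiff ℝ 2 u) (hue : ∀ x, u (-x) = u x) (hup : Periodic u L)
    (heq : ∀ x, -lam * deriv (deriv u) x + lam * u x = u x - μ * ∫ y, φ y * u (x - y)) (k : ℕ) :
    lam * ((2 * π * (k / L)) ^ 2 + 1) * cosCoeff L u k
      = (1 - μ * ∫ y, φ y * cos (2 * π * (k / L) * y)) * cosCoeff L u k := by
  have hu₂ : Continuous (deriv (deriv u)) :=
    ((contDiff_succ_iff_deriv (n := 1)).mp hu).2.2.continuous_deriv le_rfl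
  have hsplit : cosCoeff L (fun x => μ * ∫ y, φ y * u (x - y)) k
      = cosCoeff L u k + lam * cosCoeff L (deriv (deriv u)) k - lam * cosCoeff L u k := by
    simp only [cosCoeff, show ∀ x, μ * ∫ y, φ y * u (x - y)
      = u x + lam * deriv (deriv u) x - lam * u x from fun x => by linarith [heq x],
      mul_sub, mul_add, mul_left_comm _ lam]
    rw [intervalIntegral.integral_sub, intervalIntegral.integral_add,
      intervalIntegral.integral_const_mul, intervalIntegral.integral_const_mul]
    all_goals exact Continuous.intervalIntegrable (by fun_prop) _ _
  have hconv : cosCoeff L (fun x => μ * ∫ y, φ y * u (x - y)) k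
      = μ * ((∫ y, φ y * cos (2 * π * (k / L) * y)) * cosCoeff L u k) := by
    rw [← cosCoeff_convolution hL hu.continuous hue hup hφ, cosCoeff, cosCoeff,
      ← intervalIntegral.integral_const_mul]
    simp only [mul_left_comm]
  rw [cosCoeff_deriv_deriv hL hu hup, hconv] at hsplit
  linear_combination hsplit

end CosCoeff

theorem stmt11_general (L μ : ℝ) (k₀ : ℕ) (hL : 0 < L)
    (φ : ℝ → ℝ)
    (hφi : Integrable φ)
    (hatφ : ℝ)
    (hneg : hatφ < 0)
    (hpos : ∀ k : ℕ, k ≠ k₀ → 0 ≤ ∫ x, φ x * Real.cos (2 * π * ((k : ℝ) / L) * x))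
    (hμ : (4 * π ^ 2 * (k₀ : ℝ) ^ 2 / L ^ 2) / |hatφ| < μ)
    (lamμ : ℝ) (hlam : lamμ = (1 - μ * hatφ) / (4 * π ^ 2 * (k₀ : ℝ) ^ 2 / L ^ 2 + 1))
    (u : ℝ → ℝ) (hue : ∀ x, u (-x) = u x) (hup : Function.Periodic u L)
    (hu : ContDiff ℝ 2 u)
    (heq : ∀ x : ℝ, -lamμ * deriv (deriv u) x + lamμ * u x
      = u x - μ * ∫ y, φ y * u (x - y)) :
    ∃ γ : ℝ, ∀ x : ℝ, u x = γ * Real.cos (2 * π * (k₀ : ℝ) * x / L) := by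
  have hμ0 : 0 < μ := lt_of_le_of_lt (by positivity) hμ
  have hlam1 : 1 < lamμ := by
    rw [div_lt_iff₀ (abs_pos.mpr hneg.ne), abs_of_neg hneg] at hμ
    rw [hlam, lt_div_iff₀ (by positivity)]
    linarith
  have hcoeff : ∀ k ≠ k₀, cosCoeff L u k = 0 := by
    intro k hk
    have hgap : 1 - μ * ∫ y, φ y * cos (2 * π * (k / L) * y)
        < lamμ * ((2 * π * (k / L)) ^ 2 + 1) := by
      nlinarith [mul_nonneg hμ0.le (hpos k hk), sq_nonneg (2 * π * (k / L))]
    by_contra hA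
    exact hgap.ne' (mul_right_cancel₀ hA (cosCoeff_of_solution hL hφi hu hue hup heq k))
  obtain ⟨γ, hγ⟩ := exists_eq_mul_cos_of_cosCoeff_eq_zero hL hu.continuous hue hup k₀ hcoeff
  exact ⟨γ, fun x => by rw [hγ x, mul_div_right_comm, ← mul_div_assoc]⟩

/-- Under the spectral assumption `φ̂(k₀/L) < 0`, `φ̂(k/L) ≥ 0` for `k ≠ k₀`, and
`μ > μ*`, any even `L`-periodic `C²` solution of `-λ_μ u'' + λ_μ u = u - μ (φ*u)`
is a scalar multiple of `cos(2πk₀x/L)`. -/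
theorem stmt11 (L μ : ℝ) (k₀ : ℕ) (hL : 0 < L) (hk₀ : 1 ≤ k₀)
    (φ : ℝ → ℝ) (hφe : ∀ x, φ (-x) = φ x) (hφ0 : ∀ x, 0 ≤ φ x)
    (hφi : Integrable φ) (hφ1 : ∫ x, φ x = 1)
    (hatφ : ℝ) (hhat : hatφ = ∫ x, φ x * Real.cos (2 * π * ((k₀ : ℝ) / L) * x))
    (hneg : hatφ < 0)
    (hpos : ∀ k : ℕ, k ≠ k₀ → 0 ≤ ∫ x, φ x * Real.cos (2 * π * ((k : ℝ) / L) * x))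
    (hμ : (4 * π ^ 2 * (k₀ : ℝ) ^ 2 / L ^ 2) / |hatφ| < μ)
    (lamμ : ℝ) (hlam : lamμ = (1 - μ * hatφ) / (4 * π ^ 2 * (k₀ : ℝ) ^ 2 / L ^ 2 + 1))
    (u : ℝ → ℝ) (hue : ∀ x, u (-x) = u x) (hup : Function.Periodic u L)
    (hu : ContDiff ℝ 2 u)
    (heq : ∀ x : ℝ, -lamμ * deriv (deriv u) x + lamμ * u x
      = u x - μ * ∫ y, φ y * u (x - y)) :
    ∃ γ : ℝ, ∀ x : ℝ, u x = γ * Real.cos (2 * π * (k₀ : ℝ) * x / L) :=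
  stmt11_general L μ k₀ hL φ hφi hatφ hneg hpos hμ lamμ hlam u hue hup hu heq
end

section
/- Let a > 0 and suppose that for every R > 0 there exists a positive C² function v on [−R,R] satisfying v'' + (a/2)v ≤ 0 on [−R,R]. Derive a contradiction: equivalently, there exists R > 0 such that no positive C² function v on [−R,R] satisfies v'' + (a/2)v ≤ 0, namely any R with π²/(4R²) < a/2. -/
/-!
Sturm comparison with `cos (c x)`, where `c = π / (2R)`, so that `cos (c x)` is a positive
solution of `u'' + c² u = 0` on `(-R, R)` vanishing at `±R`, and `c² < a / 2`. The Wronskian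
`W = cos (c x) v' + c sin (c x) v` of `cos (c ·)` and `v` has derivative
`cos (c x) (v'' + c² v) ≤ 0` on `[-R, R]`, so `W R ≤ W (-R)`, i.e. `c v R ≤ -c v (-R)`,
which is impossible for `v > 0`.
-/

open Real Set

noncomputable def cosWronskian (c : ℝ) (v : ℝ → ℝ) (x : ℝ) : ℝ :=
  cos (c * x) * deriv v x + c * sin (c * x) * v x

section

variable {c R : ℝ} {v : ℝ → ℝ}

theorem hasDerivAt_cosWronskian {x : ℝ} (hv : DifferentiableAt ℝ v x)
    (hv' : DifferentiableAt ℝ (deriv v) x) :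
    HasDerivAt (cosWronskian c v) (cos (c * x) * (deriv (deriv v) x + c ^ 2 * v x)) x := by
  have hcx : HasDerivAt (fun x : ℝ => c * x) c x := by
    simpa using (hasDerivAt_id x).const_mul c
  have := (hcx.cos.mul hv'.hasDerivAt).add ((hcx.sin.const_mul c).mul hv.hasDerivAt)
  exact this.congr_deriv (by ring)

theorem cosWronskian_of_mul_eq_pi_div_two (hcR : c * R = π / 2) :
    cosWronskian c v R = c * v R ∧ cosWronskian c v (-R) = -c * v (-R) := by
  have hcR' : c * -R = -(π / 2) := by rw [mul_neg, hcR]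
  simp only [cosWronskian, hcR, hcR', cos_neg, sin_neg, cos_pi_div_two, sin_pi_div_two]
  constructor <;> ring

theorem cos_mul_nonneg_of_mem_Icc (hc : 0 < c) (hcR : c * R = π / 2) {x : ℝ}
    (hx : x ∈ Icc (-R) R) : 0 ≤ cos (c * x) := by
  apply cos_nonneg_of_mem_Icc
  constructor <;> nlinarith [hx.1, hx.2]

theorem antitoneOn_cosWronskian (hc : 0 < c) (hcR : c * R = π / 2) (hv : Differentiable ℝ v)
    (hv' : Differentiable ℝ (deriv v))
    (h : ∀ x ∈ Icc (-R) R, deriv (deriv v) x + c ^ 2 * v x ≤ 0) :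
    AntitoneOn (cosWronskian c v) (Icc (-R) R) := by
  have hW : ∀ x, HasDerivAt (cosWronskian c v) _ x :=
    fun x => hasDerivAt_cosWronskian (hv x) (hv' x)
  apply antitoneOn_of_deriv_nonpos (convex_Icc _ _)
  · exact fun x _ => (hW x).continuousAt.continuousWithinAt
  · exact fun x _ => (hW x).differentiableAt.differentiableWithinAt
  · intro x hx
    rw [interior_Icc] at hx
    rw [(hW x).deriv]
    exact mul_nonpos_of_nonneg_of_nonpos
      (cos_mul_nonneg_of_mem_Icc hc hcR (Ioo_subset_Icc_self hx)) (h x (Ioo_subset_Icc_self hx))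

theorem add_nonpos_of_deriv_deriv_add_sq_mul_nonpos (hc : 0 < c) (hcR : c * R = π / 2)
    (hv : Differentiable ℝ v) (hv' : Differentiable ℝ (deriv v))
    (h : ∀ x ∈ Icc (-R) R, deriv (deriv v) x + c ^ 2 * v x ≤ 0) :
    v (-R) + v R ≤ 0 := by
  have hR : 0 < R := by nlinarith [pi_pos]
  have hle := antitoneOn_cosWronskian hc hcR hv hv' h
    (left_mem_Icc.2 (by linarith)) (right_mem_Icc.2 (by linarith)) (by linarith)
  obtain ⟨hWR, hWnegR⟩ := cosWronskian_of_mul_eq_pi_div_two (v := v) hcR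
  rw [hWR, hWnegR] at hle
  nlinarith

end

theorem stmt18_general (a : ℝ) (R : ℝ) (hR : 0 < R)
    (hRa : π ^ 2 / (4 * R ^ 2) < a / 2) :
    ¬ ∃ v : ℝ → ℝ, ContDiff ℝ 2 v ∧ (∀ x ∈ Icc (-R) R, 0 < v x)
      ∧ ∀ x ∈ Icc (-R) R, deriv (deriv v) x + (a / 2) * v x ≤ 0 := by
  rintro ⟨v, hv, hvpos, hvineq⟩
  set c := π / (2 * R)
  have hc : 0 < c := by positivity
  have hcR : c * R = π / 2 := by rw [div_mul_eq_mul_div, mul_div_mul_right _ _ hR.ne']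
  have hc2 : c ^ 2 < a / 2 := by rwa [div_pow, mul_pow, show (2 : ℝ) ^ 2 = 4 by norm_num]
  have hcomp : ∀ x ∈ Icc (-R) R, deriv (deriv v) x + c ^ 2 * v x ≤ 0 := fun x hx => by
    nlinarith [hvineq x hx, hvpos x hx]
  have := add_nonpos_of_deriv_deriv_add_sq_mul_nonpos hc hcR (hv.differentiable two_ne_zero)
    hv.differentiable_deriv_two hcomp
  linarith [hvpos (-R) (left_mem_Icc.2 (by linarith)), hvpos R (right_mem_Icc.2 (by linarith))]

/-- For `R` with `π²/(4R²) < a/2`, no positive `C²` function on `[-R, R]` can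
satisfy `v'' + (a/2) v ≤ 0` there. -/
theorem stmt18 (a : ℝ) (ha : 0 < a) (R : ℝ) (hR : 0 < R)
    (hRa : π ^ 2 / (4 * R ^ 2) < a / 2) :
    ¬ ∃ v : ℝ → ℝ, ContDiff ℝ 2 v ∧ (∀ x ∈ Icc (-R) R, 0 < v x)
      ∧ ∀ x ∈ Icc (-R) R, deriv (deriv v) x + (a / 2) * v x ≤ 0 :=
  stmt18_general a R hR hRa
end
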